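/- arXiv:2203.08045 — 3 statements merged into one kernel-verified Lean document; each statement's English description precedes it below -/
import Mathlib

section
/- The boundary varifold Γ in the definition of orthogonal boundary is unique: if V is orthogonal to S along both Γ₁ and Γ₂, then Γ₁ = Γ₂. -/
open MeasureTheory RealInnerProductSpace
open scoped ENNReal

noncomputable section

/-- Euclidean `n`-space. -/
abbrev E (n : ℕ) := EuclideanSpace ℝ (Fin n)

/-- Continuous linear endomorphisms of `ℝⁿ` (`n×n` matrices); `G(m,n)` is viewed as the
subset of orthogonal projections of rank `m`. -/
abbrev CLM (n : ℕ) := E n →L[ℝ] E n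

/-- The standard orthonormal basis of `ℝⁿ`. -/
def eb (n : ℕ) : OrthonormalBasis (Fin n) ℝ (E n) := EuclideanSpace.basisFun (Fin n) ℝ

/-- `P` is an orthogonal projection. -/
def IsOrthoProj {n : ℕ} (P : CLM n) : Prop :=
  P.comp P = P ∧ ∀ v w, ⟪P v, w⟫ = ⟪v, P w⟫

/-- The projection onto `ν ∧ Q`, the span of the unit vector `ν` and the plane `Q ⊥ ν`. -/
def wedge {n : ℕ} (ν : E n) (Q : CLM n) : CLM n :=
  Q + (innerSL ℝ ν).smulRight ν

/-- Definition (orthogonal boundary): the `m`-varifold `V` (a measure on `ℝⁿ × G(m,n)`),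
with curvature `B`, is orthogonal to `S = ∂Ω` (with interior unit normal `ν`) along the
`(m−1)`-varifold `Γ`: for all `φ ∈ C¹(ℝⁿ × ℝ^{n×n}, ℝⁿ)`,
`∫ (D_Pφ·B + ⟨tr B, φ⟩ + ⟨D_xφ, P⟩) dV = −∫ ⟨ν(x), φ(x, ν(x)∧Q)⟩ dΓ(x,Q)`. -/
def VarOrth (n : ℕ) (V Γ : Measure (E n × CLM n))
    (B : E n × CLM n → (E n →L[ℝ] E n →L[ℝ] E n)) (ν : E n → E n) : Prop :=
  ∀ φ : E n × CLM n → E n, ContDiff ℝ 1 φ →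
    ∫ p, ((∑ i, ⟪fderiv ℝ φ p ((0 : E n), B p (eb n i)), eb n i⟫)
        + ⟪∑ i, B p (eb n i) (eb n i), φ p⟫
        + ∑ i, ⟪fderiv ℝ φ p (p.2 (eb n i), (0 : CLM n)), eb n i⟫) ∂V
    = - ∫ q, ⟪ν q.1, φ (q.1, wedge (ν q.1) q.2)⟫ ∂Γ

/-!
Testing the orthogonality identity with `φ(x, P) = h(x, P - ν(x) ⊗ ν(x)) ν(x)` turns its boundary
term into `-∫ h dΓ`, since `ν(x) ∧ Q - ν(x) ⊗ ν(x) = Q` and `|ν| = 1` on `S`. The interior term does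
not involve `Γ`, so `Γ₁` and `Γ₂` have the same integrals against every `C¹` function `h`. Finite
measures on a separable Banach space are determined by such integrals: the real and imaginary
parts `cos ∘ L`, `sin ∘ L` of their characteristic functions are smooth.
-/

section CharFunDual

variable {F : Type*} [NormedAddCommGroup F] [NormedSpace ℝ F] [MeasurableSpace F]
  [BorelSpace F] {μ : Measure F} [IsFiniteMeasure μ]

theorem integrable_exp_mul_I_of_isFiniteMeasure (L : StrongDual ℝ F) :
    Integrable (fun x => Complex.exp (L x * Complex.I)) μ :=
  Integrable.of_bound (by fun_prop) 1 (ae_of_all _ fun _ => (Complex.norm_exp_ofReal_mul_I _).le)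

theorem re_charFunDual (L : StrongDual ℝ F) :
    (charFunDual μ L).re = ∫ x, Real.cos (L x) ∂μ := by
  rw [charFunDual_apply]
  simpa using (integral_re (𝕜 := ℂ) (integrable_exp_mul_I_of_isFiniteMeasure (μ := μ) L)).symm

theorem im_charFunDual (L : StrongDual ℝ F) :
    (charFunDual μ L).im = ∫ x, Real.sin (L x) ∂μ := by
  rw [charFunDual_apply]
  simpa using (integral_im (𝕜 := ℂ) (integrable_exp_mul_I_of_isFiniteMeasure (μ := μ) L)).symm

variable [SecondCountableTopology F] [CompleteSpace F]

theorem MeasureTheory.Measure.ext_of_forall_integral_contDiff_eq {k : WithTop ℕ∞}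
    {ν : Measure F} [IsFiniteMeasure ν]
    (h : ∀ f : F → ℝ, ContDiff ℝ k f → ∫ x, f x ∂μ = ∫ x, f x ∂ν) : μ = ν := by
  refine Measure.ext_of_charFunDual (funext fun L => Complex.ext ?_ ?_)
  · rw [re_charFunDual, re_charFunDual]
    exact h _ (Real.contDiff_cos.comp L.contDiff)
  · rw [im_charFunDual, im_charFunDual]
    exact h _ (Real.contDiff_sin.comp L.contDiff)

end CharFunDual

theorem contDiff_innerSL_smulRight_self {H : Type*} [NormedAddCommGroup H]
    [InnerProductSpace ℝ H] {k : WithTop ℕ∞} :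
    ContDiff ℝ k fun v : H => (innerSL ℝ v).smulRight v := by
  simpa using ((ContinuousLinearMap.smulRightL ℝ H H).comp (innerSL ℝ (E := H))).contDiff.clm_apply
    (contDiff_id (𝕜 := ℝ) (n := k))

section NormalTestField

variable {n : ℕ} {ν : E n → E n} {h : E n × CLM n → ℝ}

def normalTestField (ν : E n → E n) (h : E n × CLM n → ℝ) : E n × CLM n → E n :=
  fun p => h (p.1, p.2 - (innerSL ℝ (ν p.1)).smulRight (ν p.1)) • ν p.1

theorem ContDiff.normalTestField {k : WithTop ℕ∞} (hν : ContDiff ℝ k ν) (hh : ContDiff ℝ k h) :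
    ContDiff ℝ k (normalTestField ν h) := by
  have hν' : ContDiff ℝ k fun p : E n × CLM n => ν p.1 := hν.comp contDiff_fst
  exact (hh.comp (contDiff_fst.prodMk
    (contDiff_snd.sub (contDiff_innerSL_smulRight_self.comp hν')))).smul hν'

theorem inner_normalTestField_wedge {x : E n} (hx : ‖ν x‖ = 1) (Q : CLM n) :
    ⟪ν x, normalTestField ν h (x, wedge (ν x) Q)⟫ = h (x, Q) := by
  simp [normalTestField, wedge, real_inner_smul_right, hx]

theorem integral_inner_normalTestField_wedge {Γ : Measure (E n × CLM n)}
    (hunit : ∀ᵐ q ∂Γ, ‖ν q.1‖ = 1) :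
    ∫ q, ⟪ν q.1, normalTestField ν h (q.1, wedge (ν q.1) q.2)⟫ ∂Γ = ∫ q, h q ∂Γ :=
  integral_congr_ae (hunit.mono fun _ hq => inner_normalTestField_wedge hq _)

end NormalTestField

theorem VarOrth.integral_boundary_eq {n : ℕ} {V Γ₁ Γ₂ : Measure (E n × CLM n)}
    {B : E n × CLM n → (E n →L[ℝ] E n →L[ℝ] E n)} {ν : E n → E n}
    (h₁ : VarOrth n V Γ₁ B ν) (h₂ : VarOrth n V Γ₂ B ν) {φ : E n × CLM n → E n}
    (hφ : ContDiff ℝ 1 φ) :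
    ∫ q, ⟪ν q.1, φ (q.1, wedge (ν q.1) q.2)⟫ ∂Γ₁ = ∫ q, ⟪ν q.1, φ (q.1, wedge (ν q.1) q.2)⟫ ∂Γ₂ :=
  neg_injective ((h₁ φ hφ).symm.trans (h₂ φ hφ))

theorem stmt4_general (n m : ℕ) (Ω : Set (E n))
    (ν : E n → E n) (hν : ContDiff ℝ 1 ν) (hνunit : ∀ x ∈ frontier Ω, ‖ν x‖ = 1)
    (V : Measure (E n × CLM n))
    (B : E n × CLM n → (E n →L[ℝ] E n →L[ℝ] E n))
    (Γ₁ Γ₂ : Measure (E n × CLM n)) [IsFiniteMeasure Γ₁] [IsFiniteMeasure Γ₂]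
    (hΓ₁supp : ∀ᵐ q ∂Γ₁, q.1 ∈ frontier Ω ∧ IsOrthoProj q.2 ∧ q.2 (ν q.1) = 0 ∧
        ∑ i, ⟪q.2 (eb n i), eb n i⟫ = (m : ℝ) - 1)
    (hΓ₂supp : ∀ᵐ q ∂Γ₂, q.1 ∈ frontier Ω ∧ IsOrthoProj q.2 ∧ q.2 (ν q.1) = 0 ∧
        ∑ i, ⟪q.2 (eb n i), eb n i⟫ = (m : ℝ) - 1)
    (horth₁ : VarOrth n V Γ₁ B ν) (horth₂ : VarOrth n V Γ₂ B ν) :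
    Γ₁ = Γ₂ := by
  refine Measure.ext_of_forall_integral_contDiff_eq (k := 1) fun h hh => ?_
  have hunit₁ : ∀ᵐ q ∂Γ₁, ‖ν q.1‖ = 1 := hΓ₁supp.mono fun q hq => hνunit _ hq.1
  have hunit₂ : ∀ᵐ q ∂Γ₂, ‖ν q.1‖ = 1 := hΓ₂supp.mono fun q hq => hνunit _ hq.1
  rw [← integral_inner_normalTestField_wedge hunit₁,
    ← integral_inner_normalTestField_wedge hunit₂]
  exact horth₁.integral_boundary_eq horth₂ (hν.normalTestField hh)

/-- The boundary varifold `Γ` in the definition of orthogonal boundary is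
unique: if `V` (supported in `Ω̄`, with curvature `B ∈ L¹(V)`) is orthogonal to `S = ∂Ω`
along both `Γ₁` and `Γ₂` (both supported in the bundle `G_{m−1}(TS)`), then `Γ₁ = Γ₂`. -/
theorem stmt4 (n m : ℕ) (Ω : Set (E n)) (hΩo : IsOpen Ω) (hΩb : Bornology.IsBounded Ω)
    (ν : E n → E n) (hν : ContDiff ℝ 1 ν) (hνunit : ∀ x ∈ frontier Ω, ‖ν x‖ = 1)
    (V : Measure (E n × CLM n)) [IsFiniteMeasure V]
    (B : E n × CLM n → (E n →L[ℝ] E n →L[ℝ] E n))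
    (hBint : Integrable (fun p => ‖B p‖) V)
    (hVsupp : ∀ᵐ p ∂V, p.1 ∈ closure Ω ∧ IsOrthoProj p.2 ∧
        ∑ i, ⟪p.2 (eb n i), eb n i⟫ = (m : ℝ))
    (Γ₁ Γ₂ : Measure (E n × CLM n)) [IsFiniteMeasure Γ₁] [IsFiniteMeasure Γ₂]
    (hΓ₁supp : ∀ᵐ q ∂Γ₁, q.1 ∈ frontier Ω ∧ IsOrthoProj q.2 ∧ q.2 (ν q.1) = 0 ∧
        ∑ i, ⟪q.2 (eb n i), eb n i⟫ = (m : ℝ) - 1)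
    (hΓ₂supp : ∀ᵐ q ∂Γ₂, q.1 ∈ frontier Ω ∧ IsOrthoProj q.2 ∧ q.2 (ν q.1) = 0 ∧
        ∑ i, ⟪q.2 (eb n i), eb n i⟫ = (m : ℝ) - 1)
    (horth₁ : VarOrth n V Γ₁ B ν) (horth₂ : VarOrth n V Γ₂ B ν) :
    Γ₁ = Γ₂ :=
  stmt4_general n m Ω ν hν hνunit V B Γ₁ Γ₂ hΓ₁supp hΓ₂supp horth₁ horth₂
end
end

section
/- Let S = ∂Ω be a C² hypersurface with interior unit normal ν^S and σ the reflection across S defined on a tubular neighborhood by σ(x + r ν^S(x)) = x − r ν^S(x). Then for x ∈ S: Dσ(x)ν^S(x) = −ν^S(x) and Dσ(x)v = v for v ∈ T_xS; consequently the pullback metric g_{ij} = ⟨∂_iσ, ∂_jσ⟩ satisfies g_{ij}(x) = δ_{ij}, and its derivative is Dg_{ij}(x)v = 4⟨ν^S(x), v⟩·h^S(x)(P_S e_i, P_S e_j), where P_S is the orthogonal projection onto T_xS and h^S the second fundamental form of S. -/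
/-! Differentiating `σ (y + r • ν y) = y - r • ν y` in `r`, and along curves in `S` in the
tangential directions, shows that `Dσ(x)` is the reflection `u ↦ u - 2⟪u, ν x⟫ ν x`, hence an
isometry. Differentiating these identities once more along the normal line and along curves in
`S` determines `D²σ(x)` on normal–normal, normal–tangent and tangent–tangent pairs in terms of
`Dν(x)`; the symmetry of `D²σ(x)` makes `Dν(x)` self-adjoint on `T_xS`. Finally
`DG = (D²σ)ᵀ Dσ + Dσᵀ D²σ`, and substituting both formulas leaves `4⟪ν, v⟫ h^S`. -/

open RealInnerProductSpace Filter Topology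

section Calculus

variable {E F G : Type*} [NormedAddCommGroup E] [NormedSpace ℝ E]
  [NormedAddCommGroup F] [NormedSpace ℝ F] [NormedAddCommGroup G] [NormedSpace ℝ G]
  {γ : ℝ → E} {t : ℝ} {v : E}

theorem HasFDerivAt.apply_eq_of_comp_eventuallyEq {f : E → F} {f' : E →L[ℝ] F} {g : ℝ → F}
    {w : F} (hf : HasFDerivAt f f' (γ t)) (hγ : HasDerivAt γ v t) (hg : HasDerivAt g w t)
    (h : f ∘ γ =ᶠ[𝓝 t] g) : f' v = w :=
  (hf.comp_hasDerivAt t hγ).unique (hg.congr_of_eventuallyEq h)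

theorem HasFDerivAt.clm_apply_add_eq_of_eventuallyEq {D : E → F →L[ℝ] G}
    {D' : E →L[ℝ] F →L[ℝ] G} {u : ℝ → F} {u' : F} {g : ℝ → G} {w : G}
    (hD : HasFDerivAt D D' (γ t)) (hγ : HasDerivAt γ v t) (hu : HasDerivAt u u' t)
    (hg : HasDerivAt g w t) (h : (fun s => D (γ s) (u s)) =ᶠ[𝓝 t] g) :
    D' v (u t) + D (γ t) u' = w :=
  ((hD.comp_hasDerivAt t hγ).clm_apply hu).unique (hg.congr_of_eventuallyEq h)

theorem hasDerivAt_add_smul_const (x u : E) (r : ℝ) :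
    HasDerivAt (fun s : ℝ => x + s • u) u r := by
  simpa using ((hasDerivAt_id r).smul_const u).const_add x

theorem hasDerivAt_sub_smul_const (x u : E) (r : ℝ) :
    HasDerivAt (fun s : ℝ => x - s • u) (-u) r := by
  simpa using ((hasDerivAt_id r).smul_const u).const_sub x

end Calculus

section InnerProduct

variable {E F : Type*} [NormedAddCommGroup E] [InnerProductSpace ℝ E]
  [NormedAddCommGroup F] [InnerProductSpace ℝ F]

theorem inner_eq_zero_of_hasDerivAt_of_norm_eq_one {f : ℝ → E} {f' : E} {t : ℝ}
    (hf : HasDerivAt f f' t) (h : ∀ s, ‖f s‖ = 1) : ⟪f t, f'⟫ = 0 := by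
  have hconst : (fun s => ⟪f s, f s⟫) = fun _ => (1 : ℝ) := by
    funext s; rw [real_inner_self_eq_norm_sq, h s, one_pow]
  have hderiv := hf.inner ℝ hf
  rw [hconst] at hderiv
  linarith [hderiv.unique (hasDerivAt_const t (1 : ℝ)), real_inner_comm f' (f t)]

variable [CompleteSpace E] [CompleteSpace F]

theorem isBoundedLinearMap_adjoint :
    IsBoundedLinearMap ℝ (ContinuousLinearMap.adjoint : (E →L[ℝ] F) → F →L[ℝ] E) :=
  IsLinearMap.with_bound ⟨map_add _, fun c T => by simp⟩ 1 fun T => by simp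

theorem inner_fderiv_adjoint_comp_self_apply {D : E → E →L[ℝ] F} {D' : E →L[ℝ] E →L[ℝ] F}
    {x : E} (hD : HasFDerivAt D D' x) (v w z : E) :
    ⟪fderiv ℝ (fun y => (ContinuousLinearMap.adjoint (D y)).comp (D y)) x v w, z⟫
      = ⟪D' v w, D x z⟫ + ⟪D x w, D' v z⟫ := by
  have hadj : HasFDerivAt (fun y => ContinuousLinearMap.adjoint (D y)) _ x :=
    isBoundedLinearMap_adjoint.hasFDerivAt.comp x hD
  rw [(hadj.clm_comp hD).fderiv]
  simp only [add_apply, ContinuousLinearMap.comp_apply,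
    ContinuousLinearMap.flip_apply, ContinuousLinearMap.compL_apply, inner_add_left,
    ContinuousLinearMap.adjoint_inner_left]
  exact congrArg (_ + ·) (ContinuousLinearMap.adjoint_inner_left (D' v) z (D x w))

end InnerProduct

section LinearAlgebra

variable {E : Type*} [NormedAddCommGroup E] [InnerProductSpace ℝ E]

noncomputable def tangentialPart (N u : E) : E := u - ⟪u, N⟫ • N

theorem inner_tangentialPart_left {N : E} (hN : ⟪N, N⟫ = 1) (u : E) :
    ⟪tangentialPart N u, N⟫ = 0 := by
  rw [tangentialPart, inner_sub_left, real_inner_smul_left, hN, mul_one, sub_self]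

theorem ContinuousLinearMap.apply_eq_sub_two_inner_smul {A : E →L[ℝ] E} {N : E}
    (hN : ⟪N, N⟫ = 1) (hAN : A N = -N) (hA : ∀ t, ⟪t, N⟫ = 0 → A t = t) (u : E) :
    A u = u - (2 * ⟪u, N⟫) • N := by
  have hu : A u = A (tangentialPart N u) + ⟪u, N⟫ • A N := by
    rw [← map_smul, ← map_add, tangentialPart, sub_add_cancel]
  rw [hu, hA _ (inner_tangentialPart_left hN u), hAN, tangentialPart]
  module

theorem inner_sub_two_inner_smul_sub_two_inner_smul {N : E} (hN : ⟪N, N⟫ = 1) (u w : E) :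
    ⟪u - (2 * ⟪u, N⟫) • N, w - (2 * ⟪w, N⟫) • N⟫ = ⟪u, w⟫ := by
  simp only [inner_sub_left, inner_sub_right, real_inner_smul_left, real_inner_smul_right, hN,
    real_inner_comm N w]
  ring

theorem inner_hessian_add_inner_hessian {N : E} {L : E →L[ℝ] E} {A : E → E} {B : E → E → E}
    (hN : ⟪N, N⟫ = 1) (hL : ∀ t, ⟪t, N⟫ = 0 → ⟪L t, N⟫ = 0)
    (hLsymm : ∀ s t, ⟪s, N⟫ = 0 → ⟪t, N⟫ = 0 → ⟪L s, t⟫ = ⟪s, L t⟫)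
    (hA : ∀ u, A u = u - (2 * ⟪u, N⟫) • N)
    (hB : ∀ p q, B p q = -(2 : ℝ) • (⟪p, N⟫ • L (tangentialPart N q)
      + ⟪q, N⟫ • L (tangentialPart N p) + ⟪L (tangentialPart N p), tangentialPart N q⟫ • N))
    (v w z : E) :
    ⟪B v w, A z⟫ + ⟪A w, B v z⟫
      = 4 * ⟪N, v⟫ * ⟪-L (tangentialPart N w), tangentialPart N z⟫ := by
  have hA' : ∀ u, A u = tangentialPart N u - ⟪u, N⟫ • N := fun u => by
    rw [hA, tangentialPart]; module
  have ht := inner_tangentialPart_left hN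
  have ht' : ∀ u, ⟪N, tangentialPart N u⟫ = 0 := fun u => by rw [real_inner_comm, ht]
  have hLt := fun u => hL _ (ht u)
  have hLt' : ∀ u, ⟪N, L (tangentialPart N u)⟫ = 0 := fun u => by rw [real_inner_comm, hLt]
  have hsymm : ∀ a b, ⟪tangentialPart N a, L (tangentialPart N b)⟫
      = ⟪L (tangentialPart N a), tangentialPart N b⟫ := fun a b => (hLsymm _ _ (ht a) (ht b)).symm
  have hvw : ⟪L (tangentialPart N v), tangentialPart N w⟫
      = ⟪L (tangentialPart N w), tangentialPart N v⟫ := by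
    rw [hLsymm _ _ (ht v) (ht w), real_inner_comm]
  rw [hA', hA', hB, hB]
  simp only [inner_add_left, inner_add_right, inner_sub_left, inner_sub_right, inner_neg_left,
    real_inner_smul_left, real_inner_smul_right, hN, ht, ht', hLt, hLt', hsymm, real_inner_comm N v]
  linear_combination (2 * ⟪z, N⟫) * hvw

end LinearAlgebra

section Reflection

variable {E : Type*} [NormedAddCommGroup E] [InnerProductSpace ℝ E]

def IsTubularReflection (σ : E → E) (S : Set E) (ν : E → E) (δ : ℝ) : Prop :=
  ∀ x ∈ S, ∀ r ∈ Set.Ioo (-δ) δ, σ (x + r • ν x) = x - r • ν x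

def HasTangentCurves (S : Set E) (ν : E → E) : Prop :=
  ∀ x ∈ S, ∀ v, ⟪v, ν x⟫ = 0 → ∃ γ : ℝ → E, (∀ t, γ t ∈ S) ∧ γ 0 = x ∧ HasDerivAt γ v 0

variable {σ ν : E → E} {S : Set E} {δ r : ℝ} {x v w : E}

theorem HasTangentCurves.inner_fderiv_apply_left (hcurves : HasTangentCurves S ν)
    (hνunit : ∀ y ∈ S, ‖ν y‖ = 1) (hx : x ∈ S) (hv : ⟪v, ν x⟫ = 0)
    (hν : DifferentiableAt ℝ ν x) : ⟪fderiv ℝ ν x v, ν x⟫ = 0 := by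
  obtain ⟨γ, hγS, rfl, hγ⟩ := hcurves x hx v hv
  rw [real_inner_comm]
  exact inner_eq_zero_of_hasDerivAt_of_norm_eq_one (hν.hasFDerivAt.comp_hasDerivAt 0 hγ)
    fun s => hνunit _ (hγS s)

namespace IsTubularReflection

theorem fderiv_apply_normal (h : IsTubularReflection σ S ν δ) (hx : x ∈ S)
    (hr : r ∈ Set.Ioo (-δ) δ) (hσ : DifferentiableAt ℝ σ (x + r • ν x)) :
    fderiv ℝ σ (x + r • ν x) (ν x) = -ν x :=
  hσ.hasFDerivAt.apply_eq_of_comp_eventuallyEq (hasDerivAt_add_smul_const x (ν x) r)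
    (hasDerivAt_sub_smul_const x (ν x) r)
    (eventually_of_mem (isOpen_Ioo.mem_nhds hr) fun s hs => h x hx s hs)

theorem fderiv_apply_of_curve (h : IsTubularReflection σ S ν δ) {γ : ℝ → E}
    (hγS : ∀ t, γ t ∈ S) (hγ : HasDerivAt γ v 0) (hν : DifferentiableAt ℝ ν (γ 0))
    (hr : r ∈ Set.Ioo (-δ) δ) (hσ : DifferentiableAt ℝ σ (γ 0 + r • ν (γ 0))) :
    fderiv ℝ σ (γ 0 + r • ν (γ 0)) (v + r • fderiv ℝ ν (γ 0) v)
      = v - r • fderiv ℝ ν (γ 0) v := by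
  have hνγ := hν.hasFDerivAt.comp_hasDerivAt 0 hγ
  exact hσ.hasFDerivAt.apply_eq_of_comp_eventuallyEq (hγ.add (hνγ.const_smul r))
    (hγ.sub (hνγ.const_smul r)) (Eventually.of_forall fun t => h (γ t) (hγS t) r hr)

theorem fderiv_apply_tangent (h : IsTubularReflection σ S ν δ) (hδ : 0 < δ)
    (hcurves : HasTangentCurves S ν) (hx : x ∈ S) (hv : ⟪v, ν x⟫ = 0)
    (hσ : DifferentiableAt ℝ σ x) : fderiv ℝ σ x v = v := by
  obtain ⟨γ, hγS, rfl, hγ⟩ := hcurves x hx v hv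
  refine hσ.hasFDerivAt.apply_eq_of_comp_eventuallyEq hγ hγ (Eventually.of_forall fun t => ?_)
  simpa using h (γ t) (hγS t) 0 ⟨neg_neg_of_pos hδ, hδ⟩

theorem fderiv_fderiv_apply_normal_normal (h : IsTubularReflection σ S ν δ) (hδ : 0 < δ)
    (hσ : Differentiable ℝ σ) (hσ' : DifferentiableAt ℝ (fderiv ℝ σ) x) (hx : x ∈ S) :
    fderiv ℝ (fderiv ℝ σ) x (ν x) (ν x) = 0 := by
  have h0 : (0 : ℝ) ∈ Set.Ioo (-δ) δ := ⟨neg_neg_of_pos hδ, hδ⟩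
  have hB : HasFDerivAt (fderiv ℝ σ) (fderiv ℝ (fderiv ℝ σ) x) (x + (0 : ℝ) • ν x) := by
    simpa using hσ'.hasFDerivAt
  simpa using hB.clm_apply_add_eq_of_eventuallyEq (hasDerivAt_add_smul_const x (ν x) 0)
    (hasDerivAt_const 0 (ν x)) (hasDerivAt_const 0 (-ν x))
    (eventually_of_mem (isOpen_Ioo.mem_nhds h0) fun r hr => h.fderiv_apply_normal hx hr (hσ _))

theorem fderiv_fderiv_apply_normal_tangent (h : IsTubularReflection σ S ν δ) (hδ : 0 < δ)
    (hcurves : HasTangentCurves S ν) (hνunit : ∀ y ∈ S, ‖ν y‖ = 1) (hσ : Differentiable ℝ σ)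
    (hσ' : DifferentiableAt ℝ (fderiv ℝ σ) x) (hν : DifferentiableAt ℝ ν x) (hx : x ∈ S)
    (hv : ⟪v, ν x⟫ = 0) :
    fderiv ℝ (fderiv ℝ σ) x (ν x) v = -(2 : ℝ) • fderiv ℝ ν x v := by
  have h0 : (0 : ℝ) ∈ Set.Ioo (-δ) δ := ⟨neg_neg_of_pos hδ, hδ⟩
  have hLv : fderiv ℝ σ x (fderiv ℝ ν x v) = fderiv ℝ ν x v :=
    h.fderiv_apply_tangent hδ hcurves hx (hcurves.inner_fderiv_apply_left hνunit hx hv hν) (hσ x)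
  obtain ⟨γ, hγS, rfl, hγ⟩ := hcurves _ hx v hv
  have hB : HasFDerivAt (fderiv ℝ σ) (fderiv ℝ (fderiv ℝ σ) (γ 0))
      (γ 0 + (0 : ℝ) • ν (γ 0)) := by
    simpa using hσ'.hasFDerivAt
  have key := hB.clm_apply_add_eq_of_eventuallyEq (hasDerivAt_add_smul_const _ (ν (γ 0)) 0)
    (hasDerivAt_add_smul_const v (fderiv ℝ ν (γ 0) v) 0)
    (hasDerivAt_sub_smul_const v (fderiv ℝ ν (γ 0) v) 0)
    (eventually_of_mem (isOpen_Ioo.mem_nhds h0) fun r hr =>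
      h.fderiv_apply_of_curve hγS hγ hν hr (hσ _))
  simp only [zero_smul, add_zero, hLv] at key
  rw [eq_sub_of_add_eq key]
  module

theorem fderiv_fderiv_apply_tangent_tangent (h : IsTubularReflection σ S ν δ) (hδ : 0 < δ)
    (hcurves : HasTangentCurves S ν) (hνunit : ∀ y ∈ S, ‖ν y‖ = 1) (hσ : Differentiable ℝ σ)
    (hσ' : DifferentiableAt ℝ (fderiv ℝ σ) x) (hν : DifferentiableAt ℝ ν x) (hx : x ∈ S)
    (hv : ⟪v, ν x⟫ = 0) (hw : ⟪w, ν x⟫ = 0) :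
    fderiv ℝ (fderiv ℝ σ) x v w = -(2 * ⟪fderiv ℝ ν x v, w⟫) • ν x := by
  have hAν : fderiv ℝ σ x (ν x) = -ν x := by
    simpa using h.fderiv_apply_normal hx ⟨neg_neg_of_pos hδ, hδ⟩ (r := 0) (by simpa using hσ x)
  obtain ⟨γ, hγS, rfl, hγ⟩ := hcurves _ hx v hv
  -- differentiate `Dσ(γ t) (P_{ν(γ t)} w) = P_{ν(γ t)} w` at `t = 0`
  have hνγ := hν.hasFDerivAt.comp_hasDerivAt 0 hγ
  have hwν : HasDerivAt (fun t => ⟪w, ν (γ t)⟫) ⟪w, fderiv ℝ ν (γ 0) v⟫ 0 := by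
    simpa using (hasDerivAt_const 0 w).inner ℝ hνγ
  have hu : HasDerivAt (fun t => tangentialPart (ν (γ t)) w)
      (-(⟪w, fderiv ℝ ν (γ 0) v⟫ • ν (γ 0))) 0 := by
    simpa [tangentialPart, hw] using (hwν.smul hνγ).const_sub w
  have key := hσ'.hasFDerivAt.clm_apply_add_eq_of_eventuallyEq hγ hu hu
    (Eventually.of_forall fun t => h.fderiv_apply_tangent hδ hcurves (hγS t)
      (inner_tangentialPart_left (inner_self_eq_one_of_norm_eq_one (hνunit _ (hγS t))) w)
      (hσ _))
  simp only [tangentialPart, hw, zero_smul, sub_zero, map_neg, map_smul, hAν] at key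
  rw [eq_sub_of_add_eq key, real_inner_comm]
  module

theorem inner_fderiv_apply_comm (h : IsTubularReflection σ S ν δ) (hδ : 0 < δ)
    (hcurves : HasTangentCurves S ν) (hνunit : ∀ y ∈ S, ‖ν y‖ = 1) (hσ : Differentiable ℝ σ)
    (hσ' : DifferentiableAt ℝ (fderiv ℝ σ) x) (hν : DifferentiableAt ℝ ν x) (hx : x ∈ S)
    (hv : ⟪v, ν x⟫ = 0) (hw : ⟪w, ν x⟫ = 0) :
    ⟪fderiv ℝ ν x v, w⟫ = ⟪v, fderiv ℝ ν x w⟫ := by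
  have hsymm := second_derivative_symmetric (fun y => (hσ y).hasFDerivAt) hσ'.hasFDerivAt v w
  rw [h.fderiv_fderiv_apply_tangent_tangent hδ hcurves hνunit hσ hσ' hν hx hv hw,
    h.fderiv_fderiv_apply_tangent_tangent hδ hcurves hνunit hσ hσ' hν hx hw hv] at hsymm
  have := congrArg (⟪·, ν x⟫) hsymm
  simp only [real_inner_smul_left, inner_self_eq_one_of_norm_eq_one (hνunit x hx)] at this
  rw [real_inner_comm (fderiv ℝ ν x w) v]
  linarith

theorem fderiv_fderiv_apply (h : IsTubularReflection σ S ν δ) (hδ : 0 < δ)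
    (hcurves : HasTangentCurves S ν) (hνunit : ∀ y ∈ S, ‖ν y‖ = 1) (hσ : Differentiable ℝ σ)
    (hσ' : DifferentiableAt ℝ (fderiv ℝ σ) x) (hν : DifferentiableAt ℝ ν x) (hx : x ∈ S)
    (p q : E) :
    fderiv ℝ (fderiv ℝ σ) x p q = -(2 : ℝ) • (⟪p, ν x⟫ • fderiv ℝ ν x (tangentialPart (ν x) q)
      + ⟪q, ν x⟫ • fderiv ℝ ν x (tangentialPart (ν x) p)
      + ⟪fderiv ℝ ν x (tangentialPart (ν x) p), tangentialPart (ν x) q⟫ • ν x) := by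
  have hP := inner_tangentialPart_left (inner_self_eq_one_of_norm_eq_one (hνunit x hx))
  have hsymm := second_derivative_symmetric (fun y => (hσ y).hasFDerivAt) hσ'.hasFDerivAt
  set B := fderiv ℝ (fderiv ℝ σ) x
  set P := tangentialPart (ν x)
  calc B p q = B (P p + ⟪p, ν x⟫ • ν x) (P q + ⟪q, ν x⟫ • ν x) := by
        simp only [P, tangentialPart, sub_add_cancel]
    _ = B (P p) (P q) + ⟪q, ν x⟫ • B (ν x) (P p) + ⟪p, ν x⟫ • B (ν x) (P q)
          + (⟪p, ν x⟫ * ⟪q, ν x⟫) • B (ν x) (ν x) := by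
        simp only [map_add, map_smul, add_apply, smul_apply]
        rw [hsymm (P p) (ν x)]
        module
    _ = _ := by
        rw [h.fderiv_fderiv_apply_tangent_tangent hδ hcurves hνunit hσ hσ' hν hx (hP p) (hP q),
          h.fderiv_fderiv_apply_normal_tangent hδ hcurves hνunit hσ hσ' hν hx (hP p),
          h.fderiv_fderiv_apply_normal_tangent hδ hcurves hνunit hσ hσ' hν hx (hP q),
          h.fderiv_fderiv_apply_normal_normal hδ hσ hσ' hx]
        module

end IsTubularReflection

end Reflection

theorem stmt10_general (n : ℕ)
    (S : Set (EuclideanSpace ℝ (Fin n)))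
    (ν : EuclideanSpace ℝ (Fin n) → EuclideanSpace ℝ (Fin n))
    (hν : ContDiff ℝ 1 ν) (hνunit : ∀ x ∈ S, ‖ν x‖ = 1)
    (σ : EuclideanSpace ℝ (Fin n) → EuclideanSpace ℝ (Fin n))
    (hσ : ContDiff ℝ 2 σ) (δ : ℝ) (hδ : 0 < δ)
    (hrefl : ∀ x ∈ S, ∀ r ∈ Set.Ioo (-δ) δ, σ (x + r • ν x) = x - r • ν x)
    (x : EuclideanSpace ℝ (Fin n)) (hx : x ∈ S)
    (hcurves : ∀ x' ∈ S, ∀ v, ⟪v, ν x'⟫ = 0 →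
      ∃ γ : ℝ → EuclideanSpace ℝ (Fin n),
        ContDiff ℝ 1 γ ∧ (∀ t, γ t ∈ S) ∧ γ 0 = x' ∧ deriv γ 0 = v) :
    (fderiv ℝ σ x (ν x) = -ν x)
    ∧ (∀ v, ⟪v, ν x⟫ = 0 → fderiv ℝ σ x v = v)
    ∧ (∀ v w, ⟪fderiv ℝ σ x v, fderiv ℝ σ x w⟫ = ⟪v, w⟫)
    ∧ (∀ v w z,
        ⟪(fderiv ℝ
            (fun y => (ContinuousLinearMap.adjoint (fderiv ℝ σ y)).comp (fderiv ℝ σ y))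
            x v) w, z⟫
          = 4 * ⟪ν x, v⟫ *
            ⟪-(fderiv ℝ ν x (w - ⟪w, ν x⟫ • ν x)), z - ⟪z, ν x⟫ • ν x⟫) := by
  have h : IsTubularReflection σ S ν δ := hrefl
  have hσd : Differentiable ℝ σ := hσ.differentiable (by norm_num)
  have hσ' : DifferentiableAt ℝ (fderiv ℝ σ) x :=
    (hσ.fderiv_right (m := 1) (by norm_num)).differentiable (by norm_num) x
  have hνd : DifferentiableAt ℝ ν x := hν.differentiable (by norm_num) x
  have hcurves' : HasTangentCurves S ν := fun y hy v hv => by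
    obtain ⟨γ, hγ, hγS, hγ0, rfl⟩ := hcurves y hy v hv
    exact ⟨γ, hγS, hγ0, (hγ.differentiable (by norm_num) 0).hasDerivAt⟩
  have hN : ⟪ν x, ν x⟫ = 1 := inner_self_eq_one_of_norm_eq_one (hνunit x hx)
  have hAν : fderiv ℝ σ x (ν x) = -ν x := by
    simpa using h.fderiv_apply_normal hx ⟨neg_neg_of_pos hδ, hδ⟩ (r := 0) (by simpa using hσd x)
  have hAt : ∀ v, ⟪v, ν x⟫ = 0 → fderiv ℝ σ x v = v := fun v hv =>
    h.fderiv_apply_tangent hδ hcurves' hx hv (hσd x)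
  have hA := (fderiv ℝ σ x).apply_eq_sub_two_inner_smul hN hAν hAt
  refine ⟨hAν, hAt, fun v w => by rw [hA, hA, inner_sub_two_inner_smul_sub_two_inner_smul hN],
    fun v w z => ?_⟩
  rw [inner_fderiv_adjoint_comp_self_apply hσ'.hasFDerivAt]
  exact inner_hessian_add_inner_hessian hN
    (fun t ht => hcurves'.inner_fderiv_apply_left hνunit hx ht hνd)
    (fun s t hs ht => h.inner_fderiv_apply_comm hδ hcurves' hνunit hσd hσ' hνd hx hs ht) hA
    (h.fderiv_fderiv_apply hδ hcurves' hνunit hσd hσ' hνd hx) v w z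

/-- Let `S = ∂Ω` be a `C²` hypersurface with interior unit normal `ν`
(extended to a `C¹` field) and `σ` the reflection across `S`, defined on a tubular
neighborhood by `σ(x + r ν(x)) = x − r ν(x)`. Then for `x ∈ S`:
`Dσ(x)ν(x) = −ν(x)` and `Dσ(x)v = v` for tangent vectors `v ∈ T_xS` (velocities of curves
in `S`); consequently the pullback metric `G(y) = Dσ(y)^T Dσ(y)` satisfies `G(x) = Id`,
and its derivative is `DG(x)v = 4⟨ν(x),v⟩·h^S(P_S·, P_S·)`, where `P_S` is the orthogonal
projection onto `T_xS = ν(x)^⊥` and `h^S(a,b) = ⟨W a, b⟩` with Weingarten map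
`W = −Dν(x)`. -/
theorem stmt10 (n : ℕ) (Ω : Set (EuclideanSpace ℝ (Fin n)))
    (S : Set (EuclideanSpace ℝ (Fin n))) (hS : S = frontier Ω)
    (ν : EuclideanSpace ℝ (Fin n) → EuclideanSpace ℝ (Fin n))
    (hν : ContDiff ℝ 1 ν) (hνunit : ∀ x ∈ S, ‖ν x‖ = 1)
    (σ : EuclideanSpace ℝ (Fin n) → EuclideanSpace ℝ (Fin n))
    (hσ : ContDiff ℝ 2 σ) (δ : ℝ) (hδ : 0 < δ)
    (hrefl : ∀ x ∈ S, ∀ r ∈ Set.Ioo (-δ) δ, σ (x + r • ν x) = x - r • ν x)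
    (x : EuclideanSpace ℝ (Fin n)) (hx : x ∈ S)
    (htube : {y | ∃ x' ∈ S, ∃ r ∈ Set.Ioo (-δ) δ, y = x' + r • ν x'} ∈ nhds x)
    (hcurves : ∀ x' ∈ S, ∀ v, ⟪v, ν x'⟫ = 0 →
      ∃ γ : ℝ → EuclideanSpace ℝ (Fin n),
        ContDiff ℝ 1 γ ∧ (∀ t, γ t ∈ S) ∧ γ 0 = x' ∧ deriv γ 0 = v) :
    (fderiv ℝ σ x (ν x) = -ν x)
    ∧ (∀ v, ⟪v, ν x⟫ = 0 → fderiv ℝ σ x v = v)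
    ∧ (∀ v w, ⟪fderiv ℝ σ x v, fderiv ℝ σ x w⟫ = ⟪v, w⟫)
    ∧ (∀ v w z,
        ⟪(fderiv ℝ
            (fun y => (ContinuousLinearMap.adjoint (fderiv ℝ σ y)).comp (fderiv ℝ σ y))
            x v) w, z⟫
          = 4 * ⟪ν x, v⟫ *
            ⟪-(fderiv ℝ ν x (w - ⟪w, ν x⟫ • ν x)), z - ⟪z, ν x⟫ • ν x⟫) :=
  stmt10_general n S ν hν hνunit σ hσ δ hδ hrefl x hx hcurves
end

section
/- Let Ω ⊂ ℝⁿ be a bounded C² domain whose boundary has normal injectivity radius ρ_S. If Δ is an orthogonal m-slice of Ω (a connected component of the interior of the intersection of Ω̄ with an affine m-plane, meeting ∂Ω orthogonally), then there is a point p ∈ Δ with dist(p, ∂Δ) ≥ ρ_S; in particular, for δ < ρ_S, |Δ ∩ (Ω ∖ U_δ(S))| ≥ c(m)(ρ_S − δ)^m > 0. -/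
/-!
Take `q ∈ Δ`, a point `z ∈ ∂Δ` nearest to `q`, and `u` the unit vector from `z` to `q`; the open
`m`-ball of the plane centred at `q` through `z` lies in `Δ`. Since `ν z ∈ P`, the plane balls
`B(z + σ ν z, σ)`, `0 < σ < ρ`, lie in `Ω` and miss `∂Δ ⊆ S`; they meet the ball at `q` unless
`u = -ν z`, and this is excluded because `Ω` lies locally on one side of `S`, which follows from
the continuity of `ν`. Hence `z + σ ν z ∈ Δ` for all `σ < ρ`, and its limit `p = z + ρ ν z` is a
point of `Δ` at distance `ρ` from `S`. The plane ball of radius `ρ - δ` about `p` then lies in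
`Δ ∩ (Ω ∖ U_δ(S))`, and its `m`-dimensional Hausdorff measure is `c (ρ - δ)^m`.
-/

open MeasureTheory Metric Set Filter Topology Module
open scoped RealInnerProductSpace

section RelativelyOpen

variable {X : Type*} [TopologicalSpace X] {A Δ C : Set X}

theorem isClosed_closure_diff_of_forall_mem_nhdsWithin (hA : IsClosed A) (hΔA : Δ ⊆ A)
    (hΔ : ∀ y ∈ Δ, Δ ∈ 𝓝[A] y) : IsClosed (closure Δ \ Δ) := by
  refine isClosed_of_closure_subset fun y hy => ⟨?_, fun hyΔ => ?_⟩
  · exact closure_minimal sdiff_subset isClosed_closure hy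
  · obtain ⟨U, hU, hUΔ⟩ := mem_nhdsWithin_iff_exists_mem_nhds_inter.1 (hΔ y hyΔ)
    obtain ⟨y', hy'U, hy'cl, hy'Δ⟩ := mem_closure_iff_nhds.1 hy U hU
    exact hy'Δ (hUΔ ⟨hy'U, closure_minimal hΔA hA hy'cl⟩)

theorem IsPreconnected.subset_of_forall_mem_nhdsWithin (hC : IsPreconnected C) (hCA : C ⊆ A)
    (hΔ : ∀ y ∈ Δ, Δ ∈ 𝓝[A] y) (hCΔ : (C ∩ Δ).Nonempty) (hCb : Disjoint C (closure Δ \ Δ)) :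
    C ⊆ Δ := by
  set U := ⋃₀ {U : Set X | IsOpen U ∧ U ∩ A ⊆ Δ}
  have hUA : U ∩ A ⊆ Δ := by
    rintro y ⟨⟨V, ⟨-, hVΔ⟩, hyV⟩, hyA⟩
    exact hVΔ ⟨hyV, hyA⟩
  have hΔU : Δ ⊆ U := fun y hy => by
    obtain ⟨V, hVo, hyV, hVΔ⟩ := mem_nhdsWithin.1 (hΔ y hy)
    exact ⟨V, ⟨hVo, hVΔ⟩, hyV⟩
  have hcover : C ⊆ U ∪ (closure Δ)ᶜ := fun y hy => by
    by_cases hy' : y ∈ closure Δ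
    · exact .inl (hΔU (by_contra fun hyΔ => hCb.ne_of_mem hy ⟨hy', hyΔ⟩ rfl))
    · exact .inr hy'
  have hdisj : C ∩ (U ∩ (closure Δ)ᶜ) = ∅ :=
    eq_empty_of_forall_notMem fun y ⟨hyC, hyU, hycl⟩ => hycl (subset_closure (hUA ⟨hyU, hCA hyC⟩))
  rcases isPreconnected_iff_subset_of_disjoint.1 hC _ _ (isOpen_sUnion fun V hV => hV.1)
    isClosed_closure.isOpen_compl hcover hdisj with hCU | hCcl
  · exact fun y hy => hUA ⟨hCU hy, hCA hy⟩
  · obtain ⟨y, hyC, hyΔ⟩ := hCΔ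
    exact absurd (subset_closure hyΔ) (hCcl hyC)

end RelativelyOpen

theorem mem_of_mem_closure_of_notMem_frontier {X : Type*} [TopologicalSpace X] {s : Set X}
    {x : X} (hx : x ∈ closure s) (hx' : x ∉ frontier s) : x ∈ s :=
  interior_subset (closure_sdiff_frontier s ▸ ⟨hx, hx'⟩)

theorem MapClusterPt.prodMk_of_tendsto {α X Y : Type*} [TopologicalSpace X] [TopologicalSpace Y]
    {l : Filter α} {f : α → X} {g : α → Y} {x : X} {y : Y} (hg : MapClusterPt y l g)
    (hf : Tendsto f l (𝓝 x)) : MapClusterPt (x, y) l fun a => (f a, g a) := by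
  rw [((𝓝 x).basis_sets.prod_nhds (𝓝 y).basis_sets).mapClusterPt_iff_frequently]
  rintro ⟨s, t⟩ ⟨hs, ht⟩
  exact ((mapClusterPt_iff_frequently.1 hg t ht).and_eventually (hf hs)).mono
    fun a ha => ⟨ha.2, ha.1⟩

variable {E : Type*} [NormedAddCommGroup E] [InnerProductSpace ℝ E]

theorem norm_smul_sub_smul_sq {u v : E} (hu : ‖u‖ = 1) (hv : ‖v‖ = 1) (a b : ℝ) :
    ‖a • u - b • v‖ ^ 2 = a ^ 2 - 2 * a * b * ⟪u, v⟫ + b ^ 2 := by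
  rw [norm_sub_sq_real, norm_smul, norm_smul, real_inner_smul_left, real_inner_smul_right, hu, hv]
  simp only [Real.norm_eq_abs, mul_one, sq_abs]
  ring

/-- Balls through `z` with centres in the unit directions `u` and `v` from `z` meet, near `z`,
unless `u = -v`. -/
theorem dist_add_smul_add_lt {u v : E} (hu : ‖u‖ = 1) (hv : ‖v‖ = 1) (huv : u + v ≠ 0) (z : E)
    {t d : ℝ} (ht : 0 < t) (htd : t < d) : dist (z + t • (u + v)) (z + d • u) < d := by
  have hsum := norm_add_sq_real u v
  rw [hu, hv] at hsum
  have hsq : dist (z + t • (u + v)) (z + d • u) ^ 2 < d ^ 2 := by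
    rw [dist_eq_norm, show z + t • (u + v) - (z + d • u) = t • v - (d - t) • u by module,
      norm_smul_sub_smul_sq hv hu, real_inner_comm]
    nlinarith [mul_pos (mul_pos ht (sub_pos.2 htd)) (pow_pos (norm_pos_iff.2 huv) 2)]
  exact lt_of_pow_lt_pow_left₀ 2 (by linarith) hsq

theorem AffineSubspace.add_mem_of_mem_direction {s : AffineSubspace ℝ E} {p v : E} (hp : p ∈ s)
    (hv : v ∈ s.direction) : p + v ∈ s := by
  simpa [add_comm] using s.vadd_mem_of_mem_direction hv hp

theorem AffineSubspace.isometry_add (s : AffineSubspace ℝ E) (p : E) :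
    Isometry fun v : s.direction => p + v :=
  (IsometryEquiv.addLeft p).isometry.comp isometry_subtype_coe

theorem AffineSubspace.not_isBounded (s : AffineSubspace ℝ E) [Nontrivial s.direction] {p : E}
    (hp : p ∈ s) : ¬ Bornology.IsBounded (s : Set E) := fun hs =>
  NormedSpace.unbounded_univ ℝ s.direction <|
    ((s.isometry_add p).antilipschitz.isBounded_preimage hs).subset fun v _ =>
      add_mem_of_mem_direction hp v.2

theorem AffineSubspace.ofReal_pow_mul_le_hausdorffMeasure_ball_inter [MeasurableSpace E]
    [BorelSpace E] (s : AffineSubspace ℝ E) [FiniteDimensional ℝ s.direction]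
    [Nontrivial s.direction] {p : E} (hp : p ∈ s) {r : ℝ} (hr : 0 ≤ r) :
    ENNReal.ofReal (r ^ finrank ℝ s.direction) *
        μH[finrank ℝ s.direction] (ball (0 : s.direction) 1) ≤
      μH[finrank ℝ s.direction] (ball p r ∩ s) := by
  rw [← Measure.addHaar_ball _ 0 hr,
    ← (s.isometry_add p).hausdorffMeasure_image (.inl (Nat.cast_nonneg _))]
  refine measure_mono ?_
  rintro _ ⟨v, hv, rfl⟩
  exact ⟨by simpa [dist_eq_norm] using hv, add_mem_of_mem_direction hp v.2⟩

/-- `ν` is the interior unit normal of `∂Ω` and `ρ` its normal injectivity radius; the last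
field is the property of `C²` domains that nearest boundary points are feet of normals. -/
structure HasNormalInjRadius (Ω : Set E) (ν : E → E) (ρ : ℝ) : Prop where
  norm_eq_one : ∀ x ∈ frontier Ω, ‖ν x‖ = 1
  add_smul_mem : ∀ x ∈ frontier Ω, ∀ r ∈ Ioo 0 ρ, x + r • ν x ∈ Ω
  injOn : ∀ x ∈ frontier Ω, ∀ y ∈ frontier Ω, ∀ r ∈ Ioo 0 ρ, ∀ s ∈ Ioo 0 ρ,
    x + r • ν x = y + s • ν y → x = y
  eq_add_smul_of_infDist_eq : ∀ q ∈ Ω, ∀ z ∈ frontier Ω, dist q z = infDist q (frontier Ω) →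
    q = z + dist q z • ν z

namespace HasNormalInjRadius

variable [ProperSpace E] {Ω : Set E} {ν : E → E} {ρ : ℝ}

theorem exists_eq_add_smul (h : HasNormalInjRadius Ω ν ρ) (hΩ : IsOpen Ω)
    (hS : (frontier Ω).Nonempty) {x : E} (hx : x ∈ closure Ω) :
    ∃ w ∈ frontier Ω, dist x w = infDist x (frontier Ω) ∧ x = w + dist x w • ν w := by
  by_cases hxΩ : x ∈ Ω
  · obtain ⟨w, hw, hxw⟩ := isClosed_frontier.exists_infDist_eq_dist hS x
    exact ⟨w, hw, hxw.symm, h.eq_add_smul_of_infDist_eq x hxΩ w hw hxw.symm⟩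
  · have hxS : x ∈ frontier Ω := hΩ.frontier_eq ▸ ⟨hx, hxΩ⟩
    exact ⟨x, hxS, by simp [infDist_zero_of_mem hxS], by simp⟩

theorem infDist_add_smul (h : HasNormalInjRadius Ω ν ρ) (hΩ : IsOpen Ω) {w : E}
    (hw : w ∈ frontier Ω) {s : ℝ} (hs : s ∈ Ioo 0 ρ) :
    infDist (w + s • ν w) (frontier Ω) = s := by
  set q := w + s • ν w
  have hq : q ∈ Ω := h.add_smul_mem w hw s hs
  have hqw : dist q w = s := by
    simp [q, dist_eq_norm, norm_smul, h.norm_eq_one w hw, abs_of_pos hs.1]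
  obtain ⟨w', hw', hdist, hfoot⟩ := h.exists_eq_add_smul hΩ ⟨w, hw⟩ (subset_closure hq)
  have hle : dist q w' ≤ s :=
    calc dist q w' = infDist q (frontier Ω) := hdist
      _ ≤ dist q w := infDist_le_dist_of_mem hw
      _ = s := hqw
  have hpos : 0 < dist q w' := dist_pos.2 fun heq => (hΩ.frontier_eq ▸ hw').2 (heq ▸ hq)
  obtain rfl := h.injOn w hw w' hw' s hs _ ⟨hpos, hle.trans_lt hs.2⟩ hfoot
  rw [← hdist, hqw]

theorem continuousOn (h : HasNormalInjRadius Ω ν ρ) (hΩ : IsOpen Ω) (hρ : 0 < ρ) :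
    ContinuousOn ν (frontier Ω) := by
  intro z hz
  have hs : ρ / 2 ∈ Ioo 0 ρ := ⟨by linarith, by linarith⟩
  refine (isCompact_sphere (0 : E) 1).tendsto_nhds_of_unique_mapClusterPt
    (eventually_nhdsWithin_of_forall fun w hw => by simpa using h.norm_eq_one w hw)
    fun v hv hcl => ?_
  -- A cluster value `v` of `ν` at `z` inherits the two properties that determine `ν z`:
  -- `z + (ρ/2) • v` lies in `closure Ω`, at distance `ρ/2` from the boundary.
  have hg : Continuous fun p : E × E => p.1 + (ρ / 2) • p.2 :=
    continuous_fst.add (continuous_snd.const_smul _)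
  have hK : IsClosed {p : E × E | p.1 + (ρ / 2) • p.2 ∈ closure Ω ∧
      infDist (p.1 + (ρ / 2) • p.2) (frontier Ω) = ρ / 2} :=
    (isClosed_closure.preimage hg).inter
      (isClosed_eq ((continuous_infDist_pt _).comp hg) continuous_const)
  obtain ⟨hcl, hinf⟩ := hK.mem_of_mapClusterPt
    (hcl.prodMk_of_tendsto (tendsto_nhdsWithin_of_tendsto_nhds tendsto_id))
    (eventually_nhdsWithin_of_forall fun w hw =>
      ⟨subset_closure (h.add_smul_mem w hw _ hs), h.infDist_add_smul hΩ hw hs⟩)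
  have hdist : dist (z + (ρ / 2) • v) z = ρ / 2 := by
    simp [dist_eq_norm, norm_smul, mem_sphere_zero_iff_norm.1 hv, hρ.le]
  have hmem : z + (ρ / 2) • v ∈ Ω := mem_of_mem_closure_of_notMem_frontier hcl fun hS => by
    rw [infDist_zero_of_mem hS] at hinf; linarith
  have := h.eq_add_smul_of_infDist_eq _ hmem z hz (hdist.trans hinf.symm)
  rw [hdist, add_right_inj] at this
  exact smul_right_injective E hs.1.ne' this

theorem eventually_sub_smul_notMem_closure (h : HasNormalInjRadius Ω ν ρ) (hΩ : IsOpen Ω)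
    (hρ : 0 < ρ) {z : E} (hz : z ∈ frontier Ω) :
    ∀ᶠ τ in 𝓝[>] (0 : ℝ), z - τ • ν z ∉ closure Ω := by
  have hs : ρ / 2 ∈ Ioo 0 ρ := ⟨by linarith, by linarith⟩
  obtain ⟨δ, hδ, hνδ⟩ := Metric.continuousOn_iff.1 (h.continuousOn hΩ hρ) z hz 1 one_pos
  filter_upwards [Ioo_mem_nhdsGT
    (show (0 : ℝ) < min (ρ / 6) (δ / 2) from lt_min (by linarith) (half_pos hδ))]
    with τ ⟨hτ, hτs⟩ hx
  obtain ⟨hτρ, hτδ⟩ := lt_min_iff.1 hτs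
  obtain ⟨w, hw, hdist, hfoot⟩ := h.exists_eq_add_smul hΩ ⟨z, hz⟩ hx
  set e := dist (z - τ • ν z) w
  have hxz : dist (z - τ • ν z) z = τ := by simp [norm_smul, h.norm_eq_one z hz, abs_of_pos hτ]
  have he : e ≤ τ :=
    calc e = infDist (z - τ • ν z) (frontier Ω) := hdist
      _ ≤ dist (z - τ • ν z) z := infDist_le_dist_of_mem hz
      _ = τ := hxz
  have hwz : dist w z < δ := by linarith [dist_triangle_left w z (z - τ • ν z)]
  have hk : 1 / 2 < ⟪ν w, ν z⟫ := by
    have := norm_sub_sq_real (ν w) (ν z)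
    rw [h.norm_eq_one w hw, h.norm_eq_one z hz, ← dist_eq_norm] at this
    nlinarith [hνδ w hw hwz, dist_nonneg (x := ν w) (y := ν z)]
  -- `z` lies outside `ball (w + (ρ/2) • ν w) (ρ/2)`, but `ν w ≈ ν z` would put it inside.
  have hfar : ρ / 2 ≤ ‖(ρ / 2 - e) • ν w - τ • ν z‖ :=
    calc ρ / 2 = infDist (w + (ρ / 2) • ν w) (frontier Ω) := (h.infDist_add_smul hΩ hw hs).symm
      _ ≤ dist (w + (ρ / 2) • ν w) z := infDist_le_dist_of_mem hz
      _ = _ := by rw [dist_eq_norm]; congr 1; linear_combination (norm := module) -hfoot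
  have hsq := norm_smul_sub_smul_sq (h.norm_eq_one w hw) (h.norm_eq_one z hz) (ρ / 2 - e) τ
  nlinarith [pow_le_pow_left₀ (by linarith) hfar 2, dist_nonneg (x := z - τ • ν z) (y := w),
    mul_lt_mul_of_pos_left hk (mul_pos (by linarith : 0 < ρ / 2 - e) hτ)]

end HasNormalInjRadius

structure IsOrthogonalSlice (Ω : Set E) (ν : E → E) (s : AffineSubspace ℝ E) (Δ : Set E) :
    Prop where
  subset_affineSubspace : Δ ⊆ s
  subset_closure : Δ ⊆ closure Ω
  mem_nhdsWithin : ∀ y ∈ Δ, Δ ∈ 𝓝[s] y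
  boundary_subset : ∀ y ∈ closure Δ \ Δ, y ∈ frontier Ω ∧ ν y ∈ s.direction

namespace IsOrthogonalSlice

variable {Ω : Set E} {ν : E → E} {ρ : ℝ} {s : AffineSubspace ℝ E} {Δ : Set E}

theorem ball_inter_subset (hΔ : IsOrthogonalSlice Ω ν s Δ) {x y : E} {r : ℝ} (hx : x ∈ Δ)
    (hxy : x ∈ ball y r) (hr : Disjoint (ball y r) (closure Δ \ Δ)) : ball y r ∩ s ⊆ Δ :=
  ((convex_ball y r).inter s.convex).isPreconnected.subset_of_forall_mem_nhdsWithin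
    inter_subset_right hΔ.mem_nhdsWithin ⟨x, ⟨hxy, hΔ.subset_affineSubspace hx⟩, hx⟩
    (hr.mono_left inter_subset_left)

theorem boundary_nonempty [Nontrivial s.direction] (hΔ : IsOrthogonalSlice Ω ν s Δ)
    (hne : Δ.Nonempty) (hb : Bornology.IsBounded Δ) : (closure Δ \ Δ).Nonempty := by
  obtain ⟨y, hy⟩ := hne
  by_contra hempty
  refine s.not_isBounded (hΔ.subset_affineSubspace hy) (hb.subset ?_)
  refine s.convex.isPreconnected.subset_of_forall_mem_nhdsWithin subset_rfl hΔ.mem_nhdsWithin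
    ⟨y, hΔ.subset_affineSubspace hy, hy⟩ ?_
  rw [not_nonempty_iff_eq_empty.1 hempty]
  exact disjoint_empty _

theorem ball_inter_subset_inter_diff_thickening (hΔ : IsOrthogonalSlice Ω ν s Δ) {p : E}
    (hp : p ∈ Δ) {δ : ℝ} (hδ : 0 ≤ δ) :
    ball p (infDist p (frontier Ω) - δ) ∩ s ⊆ Δ ∩ (Ω \ thickening δ (frontier Ω)) := by
  intro y hy
  have hyS : δ < infDist y (frontier Ω) := by
    linarith [mem_ball'.1 hy.1, infDist_le_infDist_add_dist (s := frontier Ω) (x := p) (y := y)]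
  have hyΔ : y ∈ Δ := hΔ.ball_inter_subset hp (mem_ball_self (pos_of_mem_ball hy.1))
    (((disjoint_ball_infDist).mono_left (ball_subset_ball (by linarith))).mono_right
      fun y hy => (hΔ.boundary_subset y hy).1) hy
  refine ⟨hyΔ, mem_of_mem_closure_of_notMem_frontier (hΔ.subset_closure hyΔ) fun hyS' => ?_,
    fun hyT => ?_⟩
  · rw [infDist_zero_of_mem hyS'] at hyS; linarith
  · obtain ⟨w, hw, hyw⟩ := mem_thickening_iff.1 hyT
    linarith [infDist_le_dist_of_mem (x := y) hw]

variable [FiniteDimensional ℝ s.direction]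

theorem closure_subset (hΔ : IsOrthogonalSlice Ω ν s Δ) : closure Δ ⊆ s :=
  closure_minimal hΔ.subset_affineSubspace s.closed_of_finiteDimensional

variable [ProperSpace E]

theorem add_smul_mem_of_ball_inter_subset (hΔ : IsOrthogonalSlice Ω ν s Δ)
    (h : HasNormalInjRadius Ω ν ρ) (hΩ : IsOpen Ω) (hρ : 0 < ρ) {z u : E} (hz : z ∈ closure Δ \ Δ)
    (hu : ‖u‖ = 1) (hus : u ∈ s.direction) {d : ℝ} (hd : 0 < d)
    (hball : ball (z + d • u) d ∩ s ⊆ Δ) {σ : ℝ} (hσ : σ ∈ Ioo 0 ρ) : z + σ • ν z ∈ Δ := by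
  obtain ⟨hzS, hνz⟩ := hΔ.boundary_subset z hz
  have hzs : z ∈ s := hΔ.closure_subset hz.1
  have hνu : ‖ν z‖ = 1 := h.norm_eq_one z hzS
  have huν : u + ν z ≠ 0 := fun h0 => by
    obtain ⟨τ, hτΩ, hτ⟩ :=
      ((h.eventually_sub_smul_notMem_closure hΩ hρ hzS).and (Ioo_mem_nhdsGT hd)).exists
    have hτu : z + τ • u ∈ ball (z + d • u) d := by
      rw [mem_ball, dist_add_left, dist_eq_norm, ← sub_smul, norm_smul, hu, mul_one,
        Real.norm_of_nonpos (by linarith [hτ.2])]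
      linarith [hτ.1]
    refine hτΩ (hΔ.subset_closure ?_)
    simpa [eq_neg_of_add_eq_zero_right h0, sub_eq_add_neg] using
      hball ⟨hτu, AffineSubspace.add_mem_of_mem_direction hzs (s.direction.smul_mem _ hus)⟩
  have ht : 0 < min d σ / 2 := half_pos (lt_min hd hσ.1)
  set x := z + (min d σ / 2) • (u + ν z)
  have hxΔ : x ∈ Δ := hball ⟨dist_add_smul_add_lt hu hνu huν z ht
    (by linarith [min_le_left d σ]), AffineSubspace.add_mem_of_mem_direction hzs
      (s.direction.smul_mem _ (s.direction.add_mem hus hνz))⟩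
  have hxσ : x ∈ ball (z + σ • ν z) σ := by
    have := dist_add_smul_add_lt hνu hu (by rwa [add_comm]) z ht
      (show min d σ / 2 < σ by linarith [min_le_right d σ])
    rwa [add_comm (ν z)] at this
  have hσb : Disjoint (ball (z + σ • ν z) σ) (closure Δ \ Δ) := by
    have := disjoint_ball_infDist (s := frontier Ω) (x := z + σ • ν z)
    rw [h.infDist_add_smul hΩ hzS hσ] at this
    exact this.mono_right fun y hy => (hΔ.boundary_subset y hy).1
  exact hΔ.ball_inter_subset hxΔ hxσ hσb
    ⟨mem_ball_self hσ.1, AffineSubspace.add_mem_of_mem_direction hzs (s.direction.smul_mem _ hνz)⟩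

theorem exists_forall_add_smul_mem (hΔ : IsOrthogonalSlice Ω ν s Δ) (h : HasNormalInjRadius Ω ν ρ)
    (hΩ : IsOpen Ω) (hρ : 0 < ρ) (hne : Δ.Nonempty) (hb : (closure Δ \ Δ).Nonempty) :
    ∃ z ∈ closure Δ \ Δ, ∀ σ ∈ Ioo 0 ρ, z + σ • ν z ∈ Δ := by
  obtain ⟨q, hq⟩ := hne
  obtain ⟨z, hzb, hqz⟩ := (isClosed_closure_diff_of_forall_mem_nhdsWithin
    s.closed_of_finiteDimensional hΔ.subset_affineSubspace hΔ.mem_nhdsWithin).exists_infDist_eq_dist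
    hb q
  set d := dist q z
  have hd : 0 < d := dist_pos.2 fun h => hzb.2 (h ▸ hq)
  set u := d⁻¹ • (q - z)
  have hu : ‖u‖ = 1 := by
    rw [norm_smul, norm_inv, Real.norm_of_nonneg hd.le, ← dist_eq_norm, inv_mul_cancel₀ hd.ne']
  have hqu : z + d • u = q := by simp [u, smul_smul, hd.ne']
  have hus : u ∈ s.direction := s.direction.smul_mem _
    (s.vsub_mem_direction (hΔ.subset_affineSubspace hq) (hΔ.closure_subset hzb.1))
  refine ⟨z, hzb, fun σ hσ => hΔ.add_smul_mem_of_ball_inter_subset h hΩ hρ hzb hu hus hd ?_ hσ⟩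
  exact hqu ▸ hΔ.ball_inter_subset hq (mem_ball_self hd) (hqz ▸ disjoint_ball_infDist)

theorem exists_infDist_frontier_eq (hΔ : IsOrthogonalSlice Ω ν s Δ) (h : HasNormalInjRadius Ω ν ρ)
    (hΩ : IsOpen Ω) (hρ : 0 < ρ) (hne : Δ.Nonempty) (hb : (closure Δ \ Δ).Nonempty) :
    ∃ p ∈ Δ, infDist p (frontier Ω) = ρ := by
  obtain ⟨z, hzb, hz⟩ := hΔ.exists_forall_add_smul_mem h hΩ hρ hne hb
  have hzS := (hΔ.boundary_subset z hzb).1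
  have htend : Tendsto (fun σ : ℝ => z + σ • ν z) (𝓝[<] ρ) (𝓝 (z + ρ • ν z)) :=
    ((continuous_const.add (continuous_id.smul continuous_const)).tendsto ρ).mono_left
      nhdsWithin_le_nhds
  have hev : ∀ᶠ σ in 𝓝[<] ρ, σ ∈ Ioo 0 ρ := Ioo_mem_nhdsLT hρ
  have hinf : infDist (z + ρ • ν z) (frontier Ω) = ρ :=
    tendsto_nhds_unique (((continuous_infDist_pt _).tendsto _).comp htend)
      ((tendsto_nhdsWithin_of_tendsto_nhds tendsto_id).congr'
        (hev.mono fun σ hσ => (h.infDist_add_smul hΩ hzS hσ).symm))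
  refine ⟨_, by_contra fun hp => ?_, hinf⟩
  have hpS := (hΔ.boundary_subset _ ⟨mem_closure_of_tendsto htend (hev.mono hz), hp⟩).1
  rw [infDist_zero_of_mem hpS] at hinf
  exact hρ.ne hinf

end IsOrthogonalSlice

theorem stmt14_general (n m : ℕ) (hm : 0 < m) (Ω : Set (EuclideanSpace ℝ (Fin n)))
    (hΩo : IsOpen Ω) (hΩb : Bornology.IsBounded Ω)
    (ν : EuclideanSpace ℝ (Fin n) → EuclideanSpace ℝ (Fin n))
    (ρ : ℝ) (hρ : 0 < ρ)
    (hνunit : ∀ x ∈ frontier Ω, ‖ν x‖ = 1)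
    (hνin : ∀ x ∈ frontier Ω, ∀ r ∈ Set.Ioo (0 : ℝ) ρ, x + r • ν x ∈ Ω)
    (hinj : ∀ x ∈ frontier Ω, ∀ y ∈ frontier Ω, ∀ r ∈ Set.Ioo (0 : ℝ) ρ,
      ∀ s ∈ Set.Ioo (0 : ℝ) ρ, x + r • ν x = y + s • ν y → x = y)
    (hnear : ∀ q ∈ Ω, ∀ z ∈ frontier Ω, dist q z = Metric.infDist q (frontier Ω) →
      q = z + (dist q z) • ν z)
    (x₀ : EuclideanSpace ℝ (Fin n)) (P : Submodule ℝ (EuclideanSpace ℝ (Fin n)))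
    (hP : Module.finrank ℝ P = m)
    (Δ : Set (EuclideanSpace ℝ (Fin n))) (hΔne : Δ.Nonempty)
    (hΔplane : Δ ⊆ {y | ∃ v ∈ P, y = x₀ + v})
    (hΔsub : Δ ⊆ closure Ω)
    (hΔopen : ∀ y ∈ Δ, ∃ ε > 0, ∀ z ∈ Metric.ball y ε, (∃ v ∈ P, z = x₀ + v) → z ∈ Δ)
    (hΔbd : ∀ y ∈ closure Δ \ Δ, y ∈ frontier Ω ∧ ν y ∈ (P : Set (EuclideanSpace ℝ (Fin n)))) :
    (∃ pt ∈ Δ, ρ ≤ Metric.infDist pt (closure Δ \ Δ)) ∧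
    ∃ c : ℝ, 0 < c ∧ ∀ δ ∈ Set.Ioo (0 : ℝ) ρ,
      ENNReal.ofReal (c * (ρ - δ) ^ m) ≤
        Measure.hausdorffMeasure (m : ℝ)
          (Δ ∩ (Ω \ Metric.thickening δ (frontier Ω))) := by
  set s := AffineSubspace.mk' x₀ P
  have hplane : {y | ∃ v ∈ P, y = x₀ + v} = (s : Set (EuclideanSpace ℝ (Fin n))) := by
    ext y
    exact ⟨fun ⟨v, hv, hy⟩ => by simpa [s, AffineSubspace.mem_mk', hy] using hv,
      fun hy => ⟨y - x₀, AffineSubspace.mem_mk'.1 hy, by abel⟩⟩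
  have hΔ : IsOrthogonalSlice Ω ν s Δ :=
    { subset_affineSubspace := hplane ▸ hΔplane
      subset_closure := hΔsub
      mem_nhdsWithin := fun y hy => by
        obtain ⟨ε, hε, hball⟩ := hΔopen y hy
        exact Metric.mem_nhdsWithin_iff.2 ⟨ε, hε, fun z hz => hball z hz.1 (hplane.symm ▸ hz.2 :)⟩
      boundary_subset := by simpa [s] using hΔbd }
  have hN : HasNormalInjRadius Ω ν ρ := ⟨hνunit, hνin, hinj, hnear⟩
  have hk : finrank ℝ s.direction = m := by rw [AffineSubspace.direction_mk', hP]
  have : Nontrivial s.direction := Module.nontrivial_of_finrank_pos (hk ▸ hm)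
  have hb := hΔ.boundary_nonempty hΔne (hΩb.closure.subset hΔsub)
  obtain ⟨p, hp, hpρ⟩ := hΔ.exists_infDist_frontier_eq hN hΩo hρ hΔne hb
  have hμ := measure_ball_pos μH[finrank ℝ s.direction] (0 : s.direction) one_pos
  refine ⟨⟨p, hp, hpρ ▸ infDist_le_infDist_of_subset (fun y hy => (hΔ.boundary_subset y hy).1) hb⟩,
    _, ENNReal.toReal_pos hμ.ne' measure_ball_lt_top.ne, fun δ hδ => ?_⟩
  rw [ENNReal.ofReal_mul ENNReal.toReal_nonneg, ENNReal.ofReal_toReal measure_ball_lt_top.ne,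
    mul_comm, ← hk]
  calc _ ≤ μH[finrank ℝ s.direction] (ball p (ρ - δ) ∩ s) :=
        s.ofReal_pow_mul_le_hausdorffMeasure_ball_inter (hΔ.subset_affineSubspace hp)
          (sub_nonneg.2 hδ.2.le)
    _ ≤ _ := measure_mono (hpρ ▸ hΔ.ball_inter_subset_inter_diff_thickening hp hδ.1.le)

/-- Let `Ω ⊂ ℝⁿ` be a bounded `C²` domain whose boundary `S = ∂Ω` (with
interior unit normal `ν`) has normal injectivity radius `ρ > 0`. If `Δ` is an orthogonal
`m`-slice of `Ω` — a nonempty connected, relatively open subset of an affine `m`-plane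
`x₀ + P` contained in `Ω̄`, whose relative boundary `∂Δ = closure Δ \ Δ` lies in `S` with
`ν ∈ P` there — then there is `p ∈ Δ` with `dist(p, ∂Δ) ≥ ρ`; in particular for every
`δ ∈ (0,ρ)` one has `|Δ ∩ (Ω ∖ U_δ(S))| ≥ c(m)(ρ − δ)^m > 0` (m-dimensional Hausdorff
measure), for a constant `c = c(m) > 0`. -/
theorem stmt14 (n m : ℕ) (hm : 0 < m) (Ω : Set (EuclideanSpace ℝ (Fin n)))
    (hΩo : IsOpen Ω) (hΩb : Bornology.IsBounded Ω) (hΩne : Ω.Nonempty)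
    (ν : EuclideanSpace ℝ (Fin n) → EuclideanSpace ℝ (Fin n))
    (ρ : ℝ) (hρ : 0 < ρ)
    (hνunit : ∀ x ∈ frontier Ω, ‖ν x‖ = 1)
    (hνin : ∀ x ∈ frontier Ω, ∀ r ∈ Set.Ioo (0 : ℝ) ρ, x + r • ν x ∈ Ω)
    (hinj : ∀ x ∈ frontier Ω, ∀ y ∈ frontier Ω, ∀ r ∈ Set.Ioo (0 : ℝ) ρ,
      ∀ s ∈ Set.Ioo (0 : ℝ) ρ, x + r • ν x = y + s • ν y → x = y)
    (hnear : ∀ q ∈ Ω, ∀ z ∈ frontier Ω, dist q z = Metric.infDist q (frontier Ω) →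
      q = z + (dist q z) • ν z)
    (x₀ : EuclideanSpace ℝ (Fin n)) (P : Submodule ℝ (EuclideanSpace ℝ (Fin n)))
    (hP : Module.finrank ℝ P = m)
    (Δ : Set (EuclideanSpace ℝ (Fin n))) (hΔne : Δ.Nonempty) (hΔconn : IsConnected Δ)
    (hΔplane : Δ ⊆ {y | ∃ v ∈ P, y = x₀ + v})
    (hΔsub : Δ ⊆ closure Ω)
    (hΔopen : ∀ y ∈ Δ, ∃ ε > 0, ∀ z ∈ Metric.ball y ε, (∃ v ∈ P, z = x₀ + v) → z ∈ Δ)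
    (hΔbd : ∀ y ∈ closure Δ \ Δ, y ∈ frontier Ω ∧ ν y ∈ (P : Set (EuclideanSpace ℝ (Fin n)))) :
    (∃ pt ∈ Δ, ρ ≤ Metric.infDist pt (closure Δ \ Δ)) ∧
    ∃ c : ℝ, 0 < c ∧ ∀ δ ∈ Set.Ioo (0 : ℝ) ρ,
      ENNReal.ofReal (c * (ρ - δ) ^ m) ≤
        Measure.hausdorffMeasure (m : ℝ)
          (Δ ∩ (Ω \ Metric.thickening δ (frontier Ω))) :=
  stmt14_general n m hm Ω hΩo hΩb ν ρ hρ hνunit hνin hinj hnear x₀ P hP Δ hΔne hΔplane hΔsub hΔopen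
    hΔbd
end
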